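/- Let f' : GL(d,ℝ) → ℝ be an invariant function with variation function F', and define the reducible function f : GL(d,ℝ)^k → ℝ by f(g₁,…,g_k) = f'(g₁·g₂⋯g_k). Then for every i ∈ {1,…,k} and every (g₁,…,g_k) ∈ GL(d,ℝ)^k, the variation functions of f satisfy F_i(g₁,…,g_k) = (g₁⋯g_{i−1})⁻¹ · F₁(g₁,…,g_k) · (g₁⋯g_{i−1}). -/

import Mathlib

open Matrix

attribute [local instance] Matrix.normedAddCommGroup Matrix.normedSpace

noncomputable section

/-- An invariant multi-function on `GL(d,ℝ)^k`: a real-valued function on `k`-tuples of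
`d × d` real matrices that is differentiable on the open set of tuples of invertible
matrices and invariant under the diagonal action of `GL(d,ℝ)` by conjugation. -/
def IsInvariantFun (d k : ℕ) (f : (Fin k → Matrix (Fin d) (Fin d) ℝ) → ℝ) : Prop :=
  DifferentiableOn ℝ f {g : Fin k → Matrix (Fin d) (Fin d) ℝ | ∀ i, IsUnit (g i)} ∧
  ∀ h : Matrix (Fin d) (Fin d) ℝ, IsUnit h →
    ∀ g : Fin k → Matrix (Fin d) (Fin d) ℝ, (∀ i, IsUnit (g i)) →
      f (fun i => h * g i * h⁻¹) = f g

/-- `F` is the tuple of variation functions of `f` with respect to the trace form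
`𝔅(X,Y) = tr (X*Y)`: the matrix `F j g` satisfies that `tr (F j g * X)` is the derivative
at `t = 0` of `t ↦ f (g₁, …, exp(tX)·g_j, …, g_k)`, for every `X`. -/
def IsVariationFun (d k : ℕ) (f : (Fin k → Matrix (Fin d) (Fin d) ℝ) → ℝ)
    (F : Fin k → (Fin k → Matrix (Fin d) (Fin d) ℝ) → Matrix (Fin d) (Fin d) ℝ) : Prop :=
  ∀ (j : Fin k) (g : Fin k → Matrix (Fin d) (Fin d) ℝ), (∀ i, IsUnit (g i)) →
    ∀ X : Matrix (Fin d) (Fin d) ℝ,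
      HasDerivAt
        (fun t : ℝ => f (Function.update g j (NormedSpace.exp (t • X) * g j)))
        (Matrix.trace (F j g * X)) 0

/-- An invariant function on `GL(d,ℝ)`: a real-valued function on `d × d` real matrices
that is differentiable on the open set of invertible matrices and invariant under
conjugation. -/
def IsInvariantFunOne (d : ℕ) (f : Matrix (Fin d) (Fin d) ℝ → ℝ) : Prop :=
  DifferentiableOn ℝ f {g : Matrix (Fin d) (Fin d) ℝ | IsUnit g} ∧
  ∀ h : Matrix (Fin d) (Fin d) ℝ, IsUnit h →
    ∀ g : Matrix (Fin d) (Fin d) ℝ, IsUnit g → f (h * g * h⁻¹) = f g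

/-- `F` is the variation function of `f : GL(d,ℝ) → ℝ` with respect to the trace form:
`tr (F g * X)` is the derivative at `t = 0` of `t ↦ f (exp(tX)·g)`, for every `X`. -/
def IsVariationFunOne (d : ℕ) (f : Matrix (Fin d) (Fin d) ℝ → ℝ)
    (F : Matrix (Fin d) (Fin d) ℝ → Matrix (Fin d) (Fin d) ℝ) : Prop :=
  ∀ g : Matrix (Fin d) (Fin d) ℝ, IsUnit g → ∀ X : Matrix (Fin d) (Fin d) ℝ,
    HasDerivAt (fun t : ℝ => f (NormedSpace.exp (t • X) * g))
      (Matrix.trace (F g * X)) 0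

/-!
Write `P = g₁ ⋯ g_{i-1}`. Replacing `g_i` by `exp(tX) g_i` turns the product `g₁ ⋯ g_k` into
`P exp(tX) P⁻¹ g₁ ⋯ g_k = exp(t PXP⁻¹) g₁ ⋯ g_k`, which is also what replacing `g₁` by
`exp(t PXP⁻¹) g₁` does. Differentiating at `t = 0` gives
`tr (F_i X) = tr (F₁ PXP⁻¹) = tr (P⁻¹F₁P X)` for every `X`, and the trace form is nondegenerate.
-/

namespace List

theorem ofFn_update {α : Type*} {k : ℕ} (g : Fin k → α) (i : Fin k) (a : α) :
    ofFn (Function.update g i a) = (ofFn g).set i a := by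
  refine ext_getElem (by simp) fun n _ _ => ?_
  simp [getElem_set, Function.update_apply, Fin.ext_iff, eq_comm]

theorem prod_ofFn_update {M : Type*} [Monoid M] {k : ℕ} (g : Fin k → M) (i : Fin k) (a : M) :
    (ofFn (Function.update g i a)).prod =
      ((ofFn g).take i).prod * a * ((ofFn g).drop (i + 1)).prod := by
  simp [ofFn_update, prod_set]

theorem prod_ofFn_update_mul {M : Type*} [Monoid M] {k : ℕ} (g : Fin k → M) (i : Fin k)
    (a Q : M) (hQ : Q * ((ofFn g).take i).prod = 1) :
    (ofFn (Function.update g i (a * g i))).prod =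
      ((ofFn g).take i).prod * a * Q * (ofFn g).prod := by
  have hprod : (ofFn g).prod = ((ofFn g).take i).prod * g i * ((ofFn g).drop (i + 1)).prod := by
    simpa using prod_ofFn_update g i (g i)
  rw [prod_ofFn_update, hprod]
  simp only [mul_assoc]
  rw [← mul_assoc Q, hQ, one_mul]

end List

theorem IsVariationFun.hasDerivAt_exp_conj_mul_prod {d k : ℕ}
    {f' : Matrix (Fin d) (Fin d) ℝ → ℝ}
    {F : Fin k → (Fin k → Matrix (Fin d) (Fin d) ℝ) → Matrix (Fin d) (Fin d) ℝ}
    (hF : IsVariationFun d k (fun g => f' (List.ofFn g).prod) F)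
    {g : Fin k → Matrix (Fin d) (Fin d) ℝ} (hg : ∀ l, IsUnit (g l)) (i : Fin k)
    (X : Matrix (Fin d) (Fin d) ℝ) :
    HasDerivAt
      (fun t : ℝ => f' (NormedSpace.exp (t • (((List.ofFn g).take i).prod * X *
        (((List.ofFn g).take i).prod)⁻¹)) * (List.ofFn g).prod))
      (trace (F i g * X)) 0 := by
  set P := ((List.ofFn g).take i).prod
  have hP : IsUnit P := List.prod_isUnit fun m hm => by
    obtain ⟨l, rfl⟩ := List.mem_ofFn.mp (List.mem_of_mem_take hm)
    exact hg l
  refine (hF i g hg X).congr_of_eventuallyEq (.of_forall fun t => ?_)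
  dsimp only
  rw [List.prod_ofFn_update_mul g i _ P⁻¹ (P.nonsing_inv_mul ((P.isUnit_iff_isUnit_det).mp hP)),
    ← exp_conj P _ hP, mul_smul_comm, smul_mul_assoc]

theorem variation_of_reducible_function_general (d k : ℕ) (hk : 0 < k)
    (f' : Matrix (Fin d) (Fin d) ℝ → ℝ)
    (F : Fin k → (Fin k → Matrix (Fin d) (Fin d) ℝ) → Matrix (Fin d) (Fin d) ℝ)
    (hF : IsVariationFun d k (fun g => f' (List.ofFn g).prod) F)
    (i : Fin k) (g : Fin k → Matrix (Fin d) (Fin d) ℝ) (hg : ∀ l, IsUnit (g l)) :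
    F i g = (((List.ofFn g).take (i : ℕ)).prod)⁻¹ * F ⟨0, hk⟩ g *
      ((List.ofFn g).take (i : ℕ)).prod := by
  set P := ((List.ofFn g).take (i : ℕ)).prod
  refine ext_iff_trace_mul_right.mpr fun X => ?_
  have h₀ := hF.hasDerivAt_exp_conj_mul_prod hg ⟨0, hk⟩ (P * X * P⁻¹)
  simp only [List.take_zero, List.prod_nil, one_mul, inv_one, mul_one] at h₀
  rw [(hF.hasDerivAt_exp_conj_mul_prod hg i X).unique h₀]
  simp only [← mul_assoc]
  rw [trace_mul_comm]
  simp only [mul_assoc]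

/-- for the reducible function `f (g₁,…,g_k) = f' (g₁ · g₂ ⋯ g_k)` associated to
an invariant function `f'` with variation function `F'`, the variation functions of `f`
satisfy `F_i (g₁,…,g_k) = (g₁ ⋯ g_{i-1})⁻¹ · F₁ (g₁,…,g_k) · (g₁ ⋯ g_{i-1})`. -/
theorem variation_of_reducible_function (d k : ℕ) (hk : 0 < k)
    (f' : Matrix (Fin d) (Fin d) ℝ → ℝ)
    (F' : Matrix (Fin d) (Fin d) ℝ → Matrix (Fin d) (Fin d) ℝ)
    (hf' : IsInvariantFunOne d f') (hF' : IsVariationFunOne d f' F')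
    (F : Fin k → (Fin k → Matrix (Fin d) (Fin d) ℝ) → Matrix (Fin d) (Fin d) ℝ)
    (hF : IsVariationFun d k (fun g => f' (List.ofFn g).prod) F)
    (i : Fin k) (g : Fin k → Matrix (Fin d) (Fin d) ℝ) (hg : ∀ l, IsUnit (g l)) :
    F i g = (((List.ofFn g).take (i : ℕ)).prod)⁻¹ * F ⟨0, hk⟩ g *
      ((List.ofFn g).take (i : ℕ)).prod :=
  variation_of_reducible_function_general d k hk f' F hF i g hg
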